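/- arXiv:1804.03564 — 7 statements merged into one kernel-verified Lean document; each statement's English description precedes it below -/
import Mathlib

section
/- For a 2-class M/G/1 queue with 0 < ρ₁, 0 < ρ₂, ρ = ρ₁+ρ₂ < 1, W₀ > 0, the relative priority class-1 mean waiting time W₁(p₁) = (1-ρp₁)W₀/((1-ρ₁-(1-p₁)ρ₂)(1-ρ₂-p₁ρ₁) - p₁(1-p₁)ρ₁ρ₂) is strictly decreasing in p₁ on [0,1], and hence W₁ takes each value in [W₀/(1-ρ₁), W₀/((1-ρ₂)(1-ρ))] for exactly one p₁ ∈ [0,1]. -/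
theorem relative_priority_strict_anti_and_complete
    (ρ₁ ρ₂ W₀ : ℝ) (h₁ : 0 < ρ₁) (h₂ : 0 < ρ₂) (hρ : ρ₁ + ρ₂ < 1) (hW : 0 < W₀) :
    let ρ := ρ₁ + ρ₂
    let W₁ : ℝ → ℝ := fun p₁ =>
      (1 - ρ * p₁) * W₀ /
        ((1 - ρ₁ - (1 - p₁) * ρ₂) * (1 - ρ₂ - p₁ * ρ₁) - p₁ * (1 - p₁) * ρ₁ * ρ₂)
    StrictAntiOn W₁ (Set.Icc (0 : ℝ) 1) ∧
    ∀ K ∈ Set.Icc (W₀ / (1 - ρ₁)) (W₀ / ((1 - ρ₂) * (1 - ρ))),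
      ∃! p₁, p₁ ∈ Set.Icc (0 : ℝ) 1 ∧ W₁ p₁ = K := by
  intro ρ W₁
  have hρ1 : ρ₁ < 1 := by linarith
  have hρ2 : ρ₂ < 1 := by linarith
  have hρlt : ρ < 1 := hρ
  -- denominator positivity on [0,1]
  have hden : ∀ p ∈ Set.Icc (0:ℝ) 1,
      0 < (1 - ρ₁ - (1 - p) * ρ₂) * (1 - ρ₂ - p * ρ₁) - p * (1 - p) * ρ₁ * ρ₂ := by
    intro p hp
    obtain ⟨hp0, hp1⟩ := hp
    have key : (1 - ρ₁ - (1 - p) * ρ₂) * (1 - ρ₂ - p * ρ₁) - p * (1 - p) * ρ₁ * ρ₂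
        = (1 - ρ) * ((1 - p) * (1 - ρ₂) + p * (1 - ρ₁)) := by ring
    rw [key]
    have : 0 < (1 - p) * (1 - ρ₂) + p * (1 - ρ₁) := by nlinarith
    nlinarith
  have hanti : StrictAntiOn W₁ (Set.Icc (0:ℝ) 1) := by
    intro p hp q hq hpq
    have hdp := hden p hp
    have hdq := hden q hq
    show _ / _ < _ / _
    rw [div_lt_div_iff₀ hdq hdp]
    obtain ⟨hp0, hp1⟩ := hp
    obtain ⟨hq0, hq1⟩ := hq
    simp only [ρ]
    nlinarith [mul_pos (mul_pos (mul_pos hW (by linarith : (0:ℝ) < 1 - ρ₁ - ρ₂))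
      (sub_pos.2 hpq)) (mul_pos h₂ (by linarith : (0:ℝ) < 2 - ρ₁ - ρ₂))]
  refine ⟨hanti, ?_⟩
  intro K hK
  have hW1 : W₁ 1 = W₀ / (1 - ρ₁) := by
    show _ / _ = _
    rw [show ((1:ℝ) - ρ₁ - (1 - 1) * ρ₂) * (1 - ρ₂ - 1 * ρ₁) - 1 * (1 - 1) * ρ₁ * ρ₂
        = (1 - ρ₁ - ρ₂) * (1 - ρ₁) by ring]
    rw [show (1 - ρ * 1) * W₀ = (1 - ρ₁ - ρ₂) * W₀ by simp only [ρ]; ring]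
    rw [mul_div_mul_left _ _ (by linarith : (1:ℝ) - ρ₁ - ρ₂ ≠ 0)]
  have hW0 : W₁ 0 = W₀ / ((1 - ρ₂) * (1 - ρ)) := by
    show _ / _ = _
    simp only [ρ]
    rw [show ((1:ℝ) - ρ₁ - (1 - 0) * ρ₂) * (1 - ρ₂ - 0 * ρ₁) - 0 * (1 - 0) * ρ₁ * ρ₂
        = (1 - ρ₂) * (1 - (ρ₁ + ρ₂)) by ring]
    rw [show (1 - (ρ₁ + ρ₂) * 0) * W₀ = W₀ by ring]
  have hcont : ContinuousOn W₁ (Set.Icc (0:ℝ) 1) := by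
    apply ContinuousOn.div
    · fun_prop
    · fun_prop
    · intro p hp; exact (hden p hp).ne'
  have hsub := intermediate_value_Icc' (by norm_num : (0:ℝ) ≤ 1) hcont
  rw [hW0, hW1] at hsub
  obtain ⟨p, hpmem, hpK⟩ := hsub hK
  refine ⟨p, ⟨hpmem, hpK⟩, ?_⟩
  rintro q ⟨hqmem, hqK⟩
  exact hanti.injOn hqmem hpmem (hqK.trans hpK.symm)
end

section
/- For a 2-class M/G/1 queue with 0 < ρ₁, 0 < ρ₂, ρ = ρ₁+ρ₂ < 1, W₀ > 0, and any p₁ ∈ [1/2, 1], setting β = (2-ρ)(1-p₁)/(1-ρ(1-p₁)) yields β ∈ [0,1] and W₀(1-ρ(1-β))/((1-ρ)(1-ρ₁(1-β))) = (1-ρp₁)W₀/((1-ρ₁-(1-p₁)ρ₂)(1-ρ₂-p₁ρ₁) - p₁(1-p₁)ρ₁ρ₂), i.e., the DDP and relative priority class-1 mean waiting times coincide. -/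
/-!
With `D = 1 - ρ (1 - p₁)` the proposed parameter satisfies `1 - β = (2 p₁ - 1) / D`, which lies
in `[0, 1]` for `p₁ ∈ [1/2, 1]`. Substituting it, the DDP numerator and the second DDP factor become
`(1 - ρ p₁) / D` and `(1 - ρ₂ (1 - p₁) - ρ₁ p₁) / D`, while the relative-priority denominator
factors as `(1 - ρ) (1 - ρ₂ (1 - p₁) - ρ₁ p₁)`; the two waiting times then visibly agree.
-/

open Set

noncomputable section

def ddpClassOneWait (ρ₁ ρ₂ W₀ β : ℝ) : ℝ :=
  W₀ * (1 - (ρ₁ + ρ₂) * (1 - β)) / ((1 - (ρ₁ + ρ₂)) * (1 - ρ₁ * (1 - β)))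

def rpClassOneWait (ρ₁ ρ₂ W₀ p₁ : ℝ) : ℝ :=
  (1 - (ρ₁ + ρ₂) * p₁) * W₀ /
    ((1 - ρ₁ - (1 - p₁) * ρ₂) * (1 - ρ₂ - p₁ * ρ₁) - p₁ * (1 - p₁) * ρ₁ * ρ₂)

/-- The DDP parameter matching relative priority with class-1 weight `p₁` at total load `ρ`. -/
def ddpParamOfRP (ρ p₁ : ℝ) : ℝ :=
  (2 - ρ) * (1 - p₁) / (1 - ρ * (1 - p₁))

end

lemma one_sub_ddpParamOfRP {ρ p₁ : ℝ} (hD : 1 - ρ * (1 - p₁) ≠ 0) :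
    1 - ddpParamOfRP ρ p₁ = (2 * p₁ - 1) / (1 - ρ * (1 - p₁)) := by
  unfold ddpParamOfRP
  field_simp
  ring

lemma one_sub_mul_one_sub_pos {ρ p₁ : ℝ} (hρ : ρ < 1) (hp : p₁ ∈ Icc (1 / 2 : ℝ) 1) :
    0 < 1 - ρ * (1 - p₁) := by
  nlinarith [hp.1, hp.2]

lemma ddpParamOfRP_mem_Icc {ρ p₁ : ℝ} (hρ : ρ < 1) (hp : p₁ ∈ Icc (1 / 2 : ℝ) 1) :
    ddpParamOfRP ρ p₁ ∈ Icc 0 1 := by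
  have hD := one_sub_mul_one_sub_pos hρ hp
  refine ⟨div_nonneg (mul_nonneg (by linarith) (by linarith [hp.2])) hD.le, ?_⟩
  have h := one_sub_ddpParamOfRP hD.ne'
  have : 0 ≤ (2 * p₁ - 1) / (1 - ρ * (1 - p₁)) := div_nonneg (by linarith [hp.1]) hD.le
  linarith

lemma rpClassOneWait_eq (ρ₁ ρ₂ W₀ p₁ : ℝ) :
    rpClassOneWait ρ₁ ρ₂ W₀ p₁ =
      (1 - (ρ₁ + ρ₂) * p₁) * W₀ / ((1 - (ρ₁ + ρ₂)) * (1 - ρ₂ * (1 - p₁) - ρ₁ * p₁)) := by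
  unfold rpClassOneWait
  ring_nf

lemma ddpClassOneWait_ddpParamOfRP {ρ₁ ρ₂ p₁ : ℝ} (W₀ : ℝ)
    (hD : 1 - (ρ₁ + ρ₂) * (1 - p₁) ≠ 0) :
    ddpClassOneWait ρ₁ ρ₂ W₀ (ddpParamOfRP (ρ₁ + ρ₂) p₁) = rpClassOneWait ρ₁ ρ₂ W₀ p₁ := by
  have hnum : 1 - (ρ₁ + ρ₂) * (1 - ddpParamOfRP (ρ₁ + ρ₂) p₁)
      = (1 - (ρ₁ + ρ₂) * p₁) / (1 - (ρ₁ + ρ₂) * (1 - p₁)) := by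
    rw [one_sub_ddpParamOfRP hD]; field_simp; ring
  have hden : 1 - ρ₁ * (1 - ddpParamOfRP (ρ₁ + ρ₂) p₁)
      = (1 - ρ₂ * (1 - p₁) - ρ₁ * p₁) / (1 - (ρ₁ + ρ₂) * (1 - p₁)) := by
    rw [one_sub_ddpParamOfRP hD]; field_simp; ring
  rw [ddpClassOneWait, hnum, hden, rpClassOneWait_eq, mul_div_assoc', mul_div_assoc',
    div_div_div_cancel_right₀ hD, mul_comm W₀]

theorem ddp_relative_priority_equivalence_upper_branch_general
    (ρ₁ ρ₂ W₀ p₁ : ℝ) (hρ : ρ₁ + ρ₂ < 1)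
    (hp : p₁ ∈ Set.Icc (1 / 2 : ℝ) 1) :
    let ρ := ρ₁ + ρ₂
    let β := (2 - ρ) * (1 - p₁) / (1 - ρ * (1 - p₁))
    β ∈ Set.Icc (0 : ℝ) 1 ∧
    W₀ * (1 - ρ * (1 - β)) / ((1 - ρ) * (1 - ρ₁ * (1 - β)))
      = (1 - ρ * p₁) * W₀ /
        ((1 - ρ₁ - (1 - p₁) * ρ₂) * (1 - ρ₂ - p₁ * ρ₁) - p₁ * (1 - p₁) * ρ₁ * ρ₂) :=
  ⟨ddpParamOfRP_mem_Icc hρ hp,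
    ddpClassOneWait_ddpParamOfRP W₀ (one_sub_mul_one_sub_pos hρ hp).ne'⟩

theorem ddp_relative_priority_equivalence_upper_branch
    (ρ₁ ρ₂ W₀ p₁ : ℝ) (h₁ : 0 < ρ₁) (h₂ : 0 < ρ₂) (hρ : ρ₁ + ρ₂ < 1) (hW : 0 < W₀)
    (hp : p₁ ∈ Set.Icc (1 / 2 : ℝ) 1) :
    let ρ := ρ₁ + ρ₂
    let β := (2 - ρ) * (1 - p₁) / (1 - ρ * (1 - p₁))
    β ∈ Set.Icc (0 : ℝ) 1 ∧
    W₀ * (1 - ρ * (1 - β)) / ((1 - ρ) * (1 - ρ₁ * (1 - β)))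
      = (1 - ρ * p₁) * W₀ /
        ((1 - ρ₁ - (1 - p₁) * ρ₂) * (1 - ρ₂ - p₁ * ρ₁) - p₁ * (1 - p₁) * ρ₁ * ρ₂) :=
  ddp_relative_priority_equivalence_upper_branch_general ρ₁ ρ₂ W₀ p₁ hρ hp
end

section
/- For a 2-class M/G/1 queue with 0 < ρ₁, 0 < ρ₂, ρ = ρ₁+ρ₂ < 1, W₀ > 0, and any p₁ ∈ (0, 1/2), setting β = (1-ρp₁)/((2-ρ)p₁) yields β > 1 and W₀/((1-ρ)(1-ρ₂(1-1/β))) = (1-ρp₁)W₀/((1-ρ₁-(1-p₁)ρ₂)(1-ρ₂-p₁ρ₁) - p₁(1-p₁)ρ₁ρ₂), i.e., the DDP and relative priority class-1 mean waiting times coincide. -/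
/-!
Put `N = 1 - ρ p₁` and `D = (2 - ρ) p₁`, so `β = N / D`. Then `N - D = 1 - 2 p₁`, which gives
`β > 1` exactly when `p₁ < 1/2`, and `1 - 1/β = (1 - 2 p₁) / N`. Both waiting times then reduce to
`N W₀ / ((1 - ρ) (N - ρ₂ (1 - 2 p₁)))`: the relative-priority denominator factors through `1 - ρ`.
-/

namespace PriorityQueue

open Set

/-- Class-1 mean waiting time under extended delay-dependent priority with parameter `β`. -/
noncomputable def ddpWait (ρ₁ ρ₂ W₀ β : ℝ) : ℝ :=
  W₀ / ((1 - (ρ₁ + ρ₂)) * (1 - ρ₂ * (1 - 1 / β)))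

/-- Class-1 mean waiting time under relative priority with class-1 weight `p₁`. -/
noncomputable def rpWait (ρ₁ ρ₂ W₀ p₁ : ℝ) : ℝ :=
  (1 - (ρ₁ + ρ₂) * p₁) * W₀ /
    ((1 - ρ₁ - (1 - p₁) * ρ₂) * (1 - ρ₂ - p₁ * ρ₁) - p₁ * (1 - p₁) * ρ₁ * ρ₂)

noncomputable def ddpParam (ρ p₁ : ℝ) : ℝ := (1 - ρ * p₁) / ((2 - ρ) * p₁)

variable {ρ ρ₁ ρ₂ p₁ : ℝ}

theorem one_lt_ddpParam (hρ : ρ < 2) (hp : p₁ ∈ Ioo (0 : ℝ) (1 / 2)) : 1 < ddpParam ρ p₁ := by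
  have hD : 0 < (2 - ρ) * p₁ := mul_pos (by linarith) hp.1
  rw [ddpParam, one_lt_div hD]
  linarith [hp.2]

theorem one_sub_one_div_ddpParam (hN : 1 - ρ * p₁ ≠ 0) :
    1 - 1 / ddpParam ρ p₁ = (1 - 2 * p₁) / (1 - ρ * p₁) := by
  rw [ddpParam, one_div_div, one_sub_div hN]
  ring_nf

theorem rp_denominator_eq (ρ₁ ρ₂ p₁ : ℝ) :
    (1 - ρ₁ - (1 - p₁) * ρ₂) * (1 - ρ₂ - p₁ * ρ₁) - p₁ * (1 - p₁) * ρ₁ * ρ₂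
      = (1 - (ρ₁ + ρ₂)) * (1 - (ρ₁ + ρ₂) * p₁ - ρ₂ * (1 - 2 * p₁)) := by
  ring

theorem ddpWait_ddpParam_eq_rpWait (W₀ : ℝ) (hN : 1 - (ρ₁ + ρ₂) * p₁ ≠ 0) :
    ddpWait ρ₁ ρ₂ W₀ (ddpParam (ρ₁ + ρ₂) p₁) = rpWait ρ₁ ρ₂ W₀ p₁ := by
  rw [ddpWait, rpWait, one_sub_one_div_ddpParam hN, rp_denominator_eq,
    mul_div_assoc', one_sub_div hN, mul_div_assoc', div_div_eq_mul_div, mul_comm W₀]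

end PriorityQueue

open PriorityQueue in
theorem ddp_relative_priority_equivalence_lower_branch_general
    (ρ₁ ρ₂ W₀ p₁ : ℝ) (hρ : ρ₁ + ρ₂ < 1)
    (hp : p₁ ∈ Set.Ioo (0 : ℝ) (1 / 2)) :
    let ρ := ρ₁ + ρ₂
    let β := (1 - ρ * p₁) / ((2 - ρ) * p₁)
    1 < β ∧
    W₀ / ((1 - ρ) * (1 - ρ₂ * (1 - 1 / β)))
      = (1 - ρ * p₁) * W₀ /
        ((1 - ρ₁ - (1 - p₁) * ρ₂) * (1 - ρ₂ - p₁ * ρ₁) - p₁ * (1 - p₁) * ρ₁ * ρ₂) := by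
  have hβ : 1 < ddpParam (ρ₁ + ρ₂) p₁ := one_lt_ddpParam (by linarith) hp
  have hN : 1 - (ρ₁ + ρ₂) * p₁ ≠ 0 := by nlinarith [mul_lt_mul_of_pos_right hρ hp.1, hp.2]
  exact ⟨hβ, ddpWait_ddpParam_eq_rpWait W₀ hN⟩

theorem ddp_relative_priority_equivalence_lower_branch
    (ρ₁ ρ₂ W₀ p₁ : ℝ) (h₁ : 0 < ρ₁) (h₂ : 0 < ρ₂) (hρ : ρ₁ + ρ₂ < 1) (hW : 0 < W₀)
    (hp : p₁ ∈ Set.Ioo (0 : ℝ) (1 / 2)) :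
    let ρ := ρ₁ + ρ₂
    let β := (1 - ρ * p₁) / ((2 - ρ) * p₁)
    1 < β ∧
    W₀ / ((1 - ρ) * (1 - ρ₂ * (1 - 1 / β)))
      = (1 - ρ * p₁) * W₀ /
        ((1 - ρ₁ - (1 - p₁) * ρ₂) * (1 - ρ₂ - p₁ * ρ₁) - p₁ * (1 - p₁) * ρ₁ * ρ₂) :=
  ddp_relative_priority_equivalence_lower_branch_general ρ₁ ρ₂ W₀ p₁ hρ hp
end

section
/- The map p₁ ↦ β given by β = (2-ρ)(1-p₁)/(1-ρ(1-p₁)) for p₁ ∈ [1/2, 1] and β = (1-ρp₁)/((2-ρ)p₁) for p₁ ∈ (0, 1/2) is a strictly decreasing bijection from (0,1] onto [0,∞) under 0 < ρ < 1, with p₁ = 1 ↦ β = 0 and p₁ = 1/2 ↦ β = 1. -/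
/-!
Both branches are built from the single Möbius map `m x = (2 - ρ) x / (1 - ρ x)`:
`β = m (1 - p₁)` for `p₁ ≥ 1/2` and `β = 1 / m p₁` for `p₁ < 1/2`.
For `ρ < 2`, `m` is continuous and strictly increasing on `[0, 1/2]` with `m 0 = 0` and
`m (1/2) = 1`, hence a bijection `[0, 1/2] → [0, 1]` by the intermediate value theorem.
So `p₁ ↦ m (1 - p₁)` maps `[1/2, 1]` decreasingly onto `[0, 1]`, `p₁ ↦ (m p₁)⁻¹` maps
`(0, 1/2]` decreasingly onto `[1, ∞)`, and the two pieces agree at `p₁ = 1/2`.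
-/

open Set

namespace PriorityToDDP

noncomputable def mobiusMap (ρ x : ℝ) : ℝ := (2 - ρ) * x / (1 - ρ * x)

noncomputable def betaOfPriority (ρ p : ℝ) : ℝ :=
  if 1 / 2 ≤ p then mobiusMap ρ (1 - p) else (mobiusMap ρ p)⁻¹

variable {ρ : ℝ}

lemma mobiusMap_zero : mobiusMap ρ 0 = 0 := by simp [mobiusMap]

lemma mobiusMap_half (hρ : ρ < 2) : mobiusMap ρ (1 / 2) = 1 := by
  rw [mobiusMap, div_eq_one_iff_eq (by linarith)]
  ring

lemma one_sub_mul_pos (hρ : ρ < 2) {x : ℝ} (hx : x ∈ Icc (0 : ℝ) (1 / 2)) :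
    0 < 1 - ρ * x := by
  rcases le_or_gt ρ 0 with hρ0 | hρ0 <;> nlinarith [hx.1, hx.2]

lemma mobiusMap_strictMonoOn (hρ : ρ < 2) : StrictMonoOn (mobiusMap ρ) (Icc 0 (1 / 2)) := by
  intro a ha b hb hab
  rw [mobiusMap, mobiusMap, div_lt_div_iff₀ (one_sub_mul_pos hρ ha) (one_sub_mul_pos hρ hb)]
  nlinarith [mul_pos (sub_pos.2 hρ) (sub_pos.2 hab)]

lemma mobiusMap_continuousOn (hρ : ρ < 2) : ContinuousOn (mobiusMap ρ) (Icc 0 (1 / 2)) :=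
  ContinuousOn.div (by fun_prop) (by fun_prop) fun _ hx => (one_sub_mul_pos hρ hx).ne'

lemma mobiusMap_bijOn_Icc (hρ : ρ < 2) :
    BijOn (mobiusMap ρ) (Icc 0 (1 / 2)) (Icc 0 1) := by
  have hends : Icc (mobiusMap ρ 0) (mobiusMap ρ (1 / 2)) = Icc 0 1 := by
    rw [mobiusMap_zero, mobiusMap_half hρ]
  refine ⟨hends ▸ (mobiusMap_strictMonoOn hρ).monotoneOn.mapsTo_Icc,
    (mobiusMap_strictMonoOn hρ).injOn, hends ▸ ?_⟩
  exact (mobiusMap_continuousOn hρ).surjOn_Icc (by norm_num) (by norm_num)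

lemma mobiusMap_bijOn_Ioc (hρ : ρ < 2) :
    BijOn (mobiusMap ρ) (Ioc 0 (1 / 2)) (Ioc 0 1) := by
  simpa only [mobiusMap_zero, Icc_sdiff_left] using
    (mobiusMap_bijOn_Icc hρ).sdiff_singleton (left_mem_Icc.2 (by norm_num))

lemma _root_.Set.bijOn_inv_Ioc_zero_one {K : Type*} [Field K] [LinearOrder K]
    [IsStrictOrderedRing K] : BijOn (·⁻¹) (Ioc (0 : K) 1) (Ici 1) := by
  refine ⟨fun x hx => (one_le_inv₀ hx.1).2 hx.2, inv_injective.injOn, fun y hy => ?_⟩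
  have hy0 : 0 < y := zero_lt_one.trans_le hy
  exact ⟨y⁻¹, ⟨inv_pos.2 hy0, inv_le_one_of_one_le₀ hy⟩, inv_inv y⟩

lemma betaOfPriority_one : betaOfPriority ρ 1 = 0 := by
  rw [betaOfPriority, if_pos (by norm_num), sub_self, mobiusMap_zero]

lemma betaOfPriority_half (hρ : ρ < 2) : betaOfPriority ρ (1 / 2) = 1 := by
  rw [betaOfPriority, if_pos le_rfl, show (1 : ℝ) - 1 / 2 = 1 / 2 by norm_num, mobiusMap_half hρ]

lemma betaOfPriority_eqOn_Icc :
    EqOn (betaOfPriority ρ) (mobiusMap ρ ∘ (1 - ·)) (Icc (1 / 2) 1) :=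
  fun _ hp => if_pos hp.1

lemma betaOfPriority_eqOn_Ioc (hρ : ρ < 2) :
    EqOn (betaOfPriority ρ) (fun p => (mobiusMap ρ p)⁻¹) (Ioc 0 (1 / 2)) := by
  intro p hp
  rcases hp.2.lt_or_eq with hlt | rfl
  · exact if_neg (not_le.2 hlt)
  · simp only [betaOfPriority_half hρ, mobiusMap_half hρ, inv_one]

lemma bijOn_one_sub_Icc : BijOn (1 - ·) (Icc (1 / 2 : ℝ) 1) (Icc 0 (1 / 2)) := by
  have h := (sub_right_injective (b := (1 : ℝ))).injOn (s := Icc (1 / 2) 1) |>.bijOn_image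
  rwa [image_const_sub_Icc, show (1 : ℝ) - 1 = 0 by norm_num,
    show (1 : ℝ) - 1 / 2 = 1 / 2 by norm_num] at h

lemma betaOfPriority_strictAntiOn_Icc (hρ : ρ < 2) :
    StrictAntiOn (betaOfPriority ρ) (Icc (1 / 2) 1) := by
  refine StrictAntiOn.congr ?_ betaOfPriority_eqOn_Icc.symm
  exact (mobiusMap_strictMonoOn hρ).comp_strictAntiOn
    (fun _ _ _ _ h => sub_lt_sub_left h 1) bijOn_one_sub_Icc.mapsTo

lemma betaOfPriority_strictAntiOn_Ioc (hρ : ρ < 2) :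
    StrictAntiOn (betaOfPriority ρ) (Ioc 0 (1 / 2)) := by
  refine StrictAntiOn.congr ?_ (betaOfPriority_eqOn_Ioc hρ).symm
  exact strictAntiOn_inv_pos.comp_strictMonoOn
    ((mobiusMap_strictMonoOn hρ).mono Ioc_subset_Icc_self)
    fun _ hp => ((mobiusMap_bijOn_Ioc hρ).mapsTo hp).1

lemma betaOfPriority_strictAntiOn (hρ : ρ < 2) :
    StrictAntiOn (betaOfPriority ρ) (Ioc 0 1) := by
  rw [← Ioc_union_Icc_eq_Ioc (by norm_num : (0 : ℝ) < 1 / 2) (by norm_num)]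
  exact (betaOfPriority_strictAntiOn_Ioc hρ).union (betaOfPriority_strictAntiOn_Icc hρ)
    (isGreatest_Ioc (by norm_num)) (isLeast_Icc (by norm_num))

lemma betaOfPriority_bijOn (hρ : ρ < 2) :
    BijOn (betaOfPriority ρ) (Ioc 0 1) (Ici 0) := by
  have hlow : BijOn (betaOfPriority ρ) (Ioc 0 (1 / 2)) (Ici 1) :=
    (bijOn_inv_Ioc_zero_one.comp (mobiusMap_bijOn_Ioc hρ)).congr
      (betaOfPriority_eqOn_Ioc hρ).symm
  have hhigh : BijOn (betaOfPriority ρ) (Icc (1 / 2) 1) (Icc 0 1) :=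
    ((mobiusMap_bijOn_Icc hρ).comp bijOn_one_sub_Icc).congr betaOfPriority_eqOn_Icc.symm
  have h := hlow.union hhigh (by
    rw [Ioc_union_Icc_eq_Ioc (by norm_num) (by norm_num)]
    exact (betaOfPriority_strictAntiOn hρ).injOn)
  rwa [Ioc_union_Icc_eq_Ioc (by norm_num) (by norm_num), union_comm,
    Icc_union_Ici_eq_Ici zero_le_one] at h

end PriorityToDDP

open PriorityToDDP in
theorem p1_to_beta_strictly_decreasing_bijection_general
    (ρ : ℝ) (hρ1 : ρ < 1) :
    let f : ℝ → ℝ := fun p₁ =>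
      if 1 / 2 ≤ p₁ then (2 - ρ) * (1 - p₁) / (1 - ρ * (1 - p₁))
      else (1 - ρ * p₁) / ((2 - ρ) * p₁)
    StrictAntiOn f (Set.Ioc (0 : ℝ) 1) ∧
    Set.BijOn f (Set.Ioc (0 : ℝ) 1) (Set.Ici (0 : ℝ)) ∧
    f 1 = 0 ∧ f (1 / 2) = 1 := by
  intro f
  have hρ : ρ < 2 := by linarith
  have hf : f = betaOfPriority ρ := by
    funext p
    simp only [f, betaOfPriority, mobiusMap, inv_div]
  rw [hf]
  exact ⟨betaOfPriority_strictAntiOn hρ, betaOfPriority_bijOn hρ, betaOfPriority_one,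
    betaOfPriority_half hρ⟩

theorem p1_to_beta_strictly_decreasing_bijection
    (ρ : ℝ) (hρ0 : 0 < ρ) (hρ1 : ρ < 1) :
    let f : ℝ → ℝ := fun p₁ =>
      if 1 / 2 ≤ p₁ then (2 - ρ) * (1 - p₁) / (1 - ρ * (1 - p₁))
      else (1 - ρ * p₁) / ((2 - ρ) * p₁)
    StrictAntiOn f (Set.Ioc (0 : ℝ) 1) ∧
    Set.BijOn f (Set.Ioc (0 : ℝ) 1) (Set.Ici (0 : ℝ)) ∧
    f 1 = 0 ∧ f (1 / 2) = 1 :=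
  p1_to_beta_strictly_decreasing_bijection_general ρ hρ1
end

section
/- Let f(p₁) = (a₁ + a₂p₁)/(a₃ + a₄p₁) with a₁ = (c₁+c₂(1-ρ))W₀, a₂ = ρ(c₂-c₁)W₀, a₃ = (1-ρ)(1-ρ₂), a₄ = ρ₂(1-ρ₂)-ρ₁(1-ρ₁), where 0 < ρ₁, 0 < ρ₂, ρ = ρ₁+ρ₂ < 1, W₀ > 0, c₁, c₂ > 0. If c₂/ρ₂ > c₁/ρ₁ then a₂a₃ - a₁a₄ > 0, hence f is strictly increasing on [0,1] (so p₁ = 0, i.e., strict priority to class 2, minimizes f). -/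
theorem c_over_rho_rule_mobius
    (ρ₁ ρ₂ W₀ c₁ c₂ : ℝ) (h₁ : 0 < ρ₁) (h₂ : 0 < ρ₂) (hρ : ρ₁ + ρ₂ < 1) (hW : 0 < W₀)
    (hc₁ : 0 < c₁) (hc₂ : 0 < c₂) (hcr : c₂ / ρ₂ > c₁ / ρ₁) :
    let ρ := ρ₁ + ρ₂
    let a₁ := (c₁ + c₂ * (1 - ρ)) * W₀
    let a₂ := ρ * (c₂ - c₁) * W₀
    let a₃ := (1 - ρ) * (1 - ρ₂)
    let a₄ := ρ₂ * (1 - ρ₂) - ρ₁ * (1 - ρ₁)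
    a₂ * a₃ - a₁ * a₄ > 0 ∧
    StrictMonoOn (fun p₁ : ℝ => (a₁ + a₂ * p₁) / (a₃ + a₄ * p₁)) (Set.Icc (0 : ℝ) 1) := by
  intro ρ a₁ a₂ a₃ a₄
  have hcross : c₁ * ρ₂ < c₂ * ρ₁ := by
    have := (div_lt_div_iff₀ h₁ h₂).mp hcr
    linarith
  have hD : a₂ * a₃ - a₁ * a₄ > 0 := by
    have key : a₂ * a₃ - a₁ * a₄
        = W₀ * (1 - (ρ₁ + ρ₂)) * (2 - (ρ₁ + ρ₂)) * (c₂ * ρ₁ - c₁ * ρ₂) := by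
      simp only [a₁, a₂, a₃, a₄, ρ]; ring
    rw [key]
    have t1 : 0 < 1 - (ρ₁ + ρ₂) := by linarith
    have t2 : 0 < 2 - (ρ₁ + ρ₂) := by linarith
    have t3 : 0 < c₂ * ρ₁ - c₁ * ρ₂ := by linarith
    positivity
  refine ⟨hD, ?_⟩
  have hden : ∀ p : ℝ, p ∈ Set.Icc (0:ℝ) 1 → 0 < a₃ + a₄ * p := by
    intro p hp
    obtain ⟨hp0, hp1⟩ := hp
    have h3 : a₃ = (1 - (ρ₁ + ρ₂)) * (1 - ρ₂) := rfl
    have h34 : a₃ + a₄ = (1 - ρ₁) * (1 - (ρ₁ + ρ₂)) := by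
      simp only [a₃, a₄, ρ]; ring
    nlinarith [mul_nonneg (sub_nonneg.mpr hp1) (show (0:ℝ) ≤ 1 - (ρ₁+ρ₂) by linarith),
      mul_pos h₂ (show (0:ℝ) < 1 - (ρ₁+ρ₂) by linarith)]
  intro x hx y hy hxy
  have hdx := hden x hx
  have hdy := hden y hy
  rw [div_lt_div_iff₀ hdx hdy]
  nlinarith [mul_pos hD (sub_pos.mpr hxy)]
end

section
/- For a 2-class M/G/1 queue with 0 < ρ₁, 0 < ρ₂, ρ = ρ₁+ρ₂ < 1, W₀ > 0, and costs c₁, c₂ > 0 with c₁/ρ₁ > c₂/ρ₂, the minimum of c₁W₁(p₁) + c₂W₂(p₁) over p₁ ∈ [0,1] under relative priority is attained at p₁ = 1 (strict priority to class 1), and the minimum value is c₁W₀/(1-ρ₁) + c₂W₀/((1-ρ₁)(1-ρ)). -/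
theorem c_over_rho_rule_priority_to_class_one
    (ρ₁ ρ₂ W₀ c₁ c₂ : ℝ) (h₁ : 0 < ρ₁) (h₂ : 0 < ρ₂) (hρ : ρ₁ + ρ₂ < 1) (hW : 0 < W₀)
    (hc₁ : 0 < c₁) (hc₂ : 0 < c₂) (hcr : c₁ / ρ₁ > c₂ / ρ₂) :
    let ρ := ρ₁ + ρ₂
    let D : ℝ → ℝ := fun p₁ =>
      (1 - ρ₁ - (1 - p₁) * ρ₂) * (1 - ρ₂ - p₁ * ρ₁) - p₁ * (1 - p₁) * ρ₁ * ρ₂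
    let f : ℝ → ℝ := fun p₁ =>
      c₁ * ((1 - ρ * p₁) * W₀ / D p₁) + c₂ * ((1 - ρ * (1 - p₁)) * W₀ / D p₁)
    (∀ p₁ ∈ Set.Icc (0 : ℝ) 1, f 1 ≤ f p₁) ∧
    f 1 = c₁ * W₀ / (1 - ρ₁) + c₂ * W₀ / ((1 - ρ₁) * (1 - ρ)) := by
  intro ρ D f
  have hA : 0 < 1 - (ρ₁ + ρ₂) := by linarith
  have h1r1 : 0 < 1 - ρ₁ := by linarith
  have h1r2 : 0 < 1 - ρ₂ := by linarith
  have hcross : c₂ * ρ₁ < c₁ * ρ₂ := by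
    have := (div_lt_div_iff₀ h₂ h₁).mp hcr
    linarith
  have hDpos : ∀ p ∈ Set.Icc (0 : ℝ) 1, 0 < D p := by
    intro p hp
    obtain ⟨hp0, hp1⟩ := hp
    have : D p = (1 - (ρ₁ + ρ₂)) * ((1 - p) * (1 - ρ₂) + p * (1 - ρ₁)) := by
      simp only [D]; ring
    rw [this]
    have h1p : 0 ≤ 1 - p := by linarith
    have hin : 0 < (1 - p) * (1 - ρ₂) + p * (1 - ρ₁) := by
      rcases le_total ρ₁ ρ₂ with h | h
      · nlinarith
      · nlinarith
    exact mul_pos hA hin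
  have hD1 : D 1 = (1 - (ρ₁ + ρ₂)) * (1 - ρ₁) := by simp only [D]; ring
  have hD1pos : 0 < D 1 := hDpos 1 ⟨zero_le_one, le_refl 1⟩
  constructor
  · intro p hp
    have hDp := hDpos p hp
    obtain ⟨hp0, hp1⟩ := hp
    have key : f p - f 1 =
        W₀ * (1 - (ρ₁ + ρ₂)) * (1 - p) * (2 - (ρ₁ + ρ₂)) * (c₁ * ρ₂ - c₂ * ρ₁)
          / (D p * D 1) := by
      simp only [f]
      field_simp
      simp only [D]
      ring
    have hnum : 0 ≤ W₀ * (1 - (ρ₁ + ρ₂)) * (1 - p) * (2 - (ρ₁ + ρ₂)) * (c₁ * ρ₂ - c₂ * ρ₁) := by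
      have h2r : 0 ≤ 2 - (ρ₁ + ρ₂) := by linarith
      have h1p : 0 ≤ 1 - p := by linarith
      have hc : 0 ≤ c₁ * ρ₂ - c₂ * ρ₁ := by linarith
      exact mul_nonneg (mul_nonneg (mul_nonneg (mul_nonneg hW.le hA.le) h1p) h2r) hc
    have : 0 ≤ f p - f 1 := by
      rw [key]
      exact div_nonneg hnum (mul_nonneg hDp.le hD1pos.le)
    linarith
  · simp only [f, hD1]
    have hρdef : ρ = ρ₁ + ρ₂ := rfl
    rw [hρdef]
    field_simp
    ring
end

section
/- For a 2-class M/G/1 queue with 0 < ρ₁, 0 < ρ₂, ρ = ρ₁+ρ₂ < 1, W₀ > 0, and K satisfying W₀/(1-ρ₁) ≤ K ≤ W₀/((1-ρ)(1-ρ₂)), there exists a unique p₁ ∈ [0,1] with W₁^RP(p₁) = K, and it is given by p₁ = (W₀ - K(1-ρ₂)(1-ρ)) / (ρW₀ + K(ρ₂(1-ρ₂) - ρ₁(1-ρ₁))). -/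
theorem relative_priority_unique_parameter_for_target
    (ρ₁ ρ₂ W₀ K : ℝ) (h₁ : 0 < ρ₁) (h₂ : 0 < ρ₂) (hρ : ρ₁ + ρ₂ < 1) (hW : 0 < W₀)
    (hK : K ∈ Set.Icc (W₀ / (1 - ρ₁)) (W₀ / ((1 - (ρ₁ + ρ₂)) * (1 - ρ₂)))) :
    let ρ := ρ₁ + ρ₂
    let W₁ : ℝ → ℝ := fun p₁ =>
      (1 - ρ * p₁) * W₀ /
        ((1 - ρ₁ - (1 - p₁) * ρ₂) * (1 - ρ₂ - p₁ * ρ₁) - p₁ * (1 - p₁) * ρ₁ * ρ₂)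
    let pstar := (W₀ - K * (1 - ρ₂) * (1 - ρ)) /
      (ρ * W₀ + K * (ρ₂ * (1 - ρ₂) - ρ₁ * (1 - ρ₁)))
    pstar ∈ Set.Icc (0 : ℝ) 1 ∧ W₁ pstar = K ∧
    ∀ q ∈ Set.Icc (0 : ℝ) 1, W₁ q = K → q = pstar := by
  intro ρ W₁ pstar
  obtain ⟨hKl, hKu⟩ := hK
  have hρpos : (0:ℝ) < ρ := by positivity
  have h1ρ : 0 < 1 - ρ := by simp only [ρ]; linarith
  have h1ρ₁ : 0 < 1 - ρ₁ := by linarith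
  have h1ρ₂ : 0 < 1 - ρ₂ := by linarith
  have hden : 0 < (1 - (ρ₁ + ρ₂)) * (1 - ρ₂) := by positivity
  -- translate the bounds on K
  have hKl' : W₀ ≤ K * (1 - ρ₁) := by
    rw [div_le_iff₀ h1ρ₁] at hKl; linarith
  have hKu' : K * ((1 - ρ) * (1 - ρ₂)) ≤ W₀ := by
    rw [le_div_iff₀ hden] at hKu
    simp only [ρ]; linarith
  have hK0 : 0 < K := by nlinarith
  set c : ℝ := ρ₂ * (1 - ρ₂) - ρ₁ * (1 - ρ₁) with hc
  set M : ℝ := ρ * W₀ + K * c with hMdef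
  set N : ℝ := W₀ - K * (1 - ρ₂) * (1 - ρ) with hNdef
  have hMlb : K * (ρ₂ * (1 - ρ) * (2 - ρ)) ≤ M := by
    have : ρ * (K * ((1 - ρ) * (1 - ρ₂))) ≤ ρ * W₀ :=
      mul_le_mul_of_nonneg_left hKu' (le_of_lt hρpos)
    have hid : ρ * ((1 - ρ) * (1 - ρ₂)) + c = ρ₂ * (1 - ρ) * (2 - ρ) := by
      simp only [hc, ρ]; ring
    nlinarith
  have hM : 0 < M := by
    have hpos : 0 < K * (ρ₂ * (1 - ρ) * (2 - ρ)) := by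
      have : 0 < 2 - ρ := by linarith
      positivity
    linarith
  have hMne : M ≠ 0 := ne_of_gt hM
  have hN0 : 0 ≤ N := by simp only [hNdef]; nlinarith
  have hNM : N ≤ M := by
    have hid : M - N = (1 - ρ) * (K * (1 - ρ₁) - W₀) := by
      simp only [hMdef, hNdef, hc, ρ]; ring
    nlinarith
  have hpstar : pstar = N / M := rfl
  refine ⟨⟨by rw [hpstar]; positivity, by rw [hpstar, div_le_one hM]; exact hNM⟩, ?_, ?_⟩
  · -- W₁ pstar = K
    show (1 - ρ * pstar) * W₀ /
        ((1 - ρ₁ - (1 - pstar) * ρ₂) * (1 - ρ₂ - pstar * ρ₁) - pstar * (1 - pstar) * ρ₁ * ρ₂) = K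
    have hDid : (1 - ρ₁ - (1 - pstar) * ρ₂) * (1 - ρ₂ - pstar * ρ₁) - pstar * (1 - pstar) * ρ₁ * ρ₂
        = (1 - ρ) * (1 - ρ₂) + pstar * c := by
      simp only [hc, ρ]; ring
    have hDval : ((1 - ρ) * (1 - ρ₂) + pstar * c) * M = W₀ * (ρ₂ * (1 - ρ) * (2 - ρ)) := by
      rw [hpstar]
      field_simp
      simp only [hMdef, hNdef, hc, ρ]; ring
    have hDpos : 0 < (1 - ρ) * (1 - ρ₂) + pstar * c := by
      have hr : 0 < W₀ * (ρ₂ * (1 - ρ) * (2 - ρ)) := by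
        have : 0 < 2 - ρ := by linarith
        positivity
      nlinarith [hDval]
    rw [hDid, div_eq_iff (ne_of_gt hDpos)]
    have hNum : ((1 - ρ * pstar) * W₀ - K * ((1 - ρ) * (1 - ρ₂) + pstar * c)) * M = 0 := by
      rw [hpstar]
      field_simp
      simp only [hMdef, hNdef, hc, ρ]; ring
    have := mul_eq_zero.mp hNum
    rcases this with h | h
    · linarith
    · exact absurd h hMne
  · intro q hq hWq
    have hDid : (1 - ρ₁ - (1 - q) * ρ₂) * (1 - ρ₂ - q * ρ₁) - q * (1 - q) * ρ₁ * ρ₂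
        = (1 - ρ) * (1 - ρ₂) + q * c := by
      simp only [hc, ρ]; ring
    have hWq' : (1 - ρ * q) * W₀ / ((1 - ρ) * (1 - ρ₂) + q * c) = K := by
      rw [← hDid]; exact hWq
    by_cases hD : (1 - ρ) * (1 - ρ₂) + q * c = 0
    · rw [hD, div_zero] at hWq'
      exact absurd hWq'.symm (ne_of_gt hK0)
    · rw [div_eq_iff hD] at hWq'
      have hqM : q * M = N := by
        simp only [hMdef, hNdef, hc] at *
        nlinarith [hWq']
      rw [hpstar, eq_div_iff hMne]
      exact hqM
end
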